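/- For 0 < ε < λ and u ∈ [0,1], the function Φ_ε(u) = 1 - (ε/λ + ((λ-ε)/λ)(1-u)³)^{1/3} is concave on [0,1]. -/

import Mathlib

/-!
With `a = ε/λ` and `b = (λ-ε)/λ`, both nonnegative, `(a + b (1-u)³)^{1/3}` is the `ℓ³` norm of the
vector `(a^{1/3}, b^{1/3} (1-u))`, which depends affinely on `u`. A norm composed with an affine map
is convex, so `Φ_ε` is concave.
-/

open Real Set

theorem PiLp.norm_toLp_pair {p : ℝ} (hp : 0 < p) (x y : ℝ) :
    ‖WithLp.toLp (ENNReal.ofReal p) ![x, y]‖ = (|x| ^ p + |y| ^ p) ^ p⁻¹ := by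
  rw [PiLp.norm_eq_sum (by rwa [ENNReal.toReal_ofReal hp.le]), ENNReal.toReal_ofReal hp.le,
    Fin.sum_univ_two, one_div]
  rfl

theorem ConvexOn.comp_const_sub {f : ℝ → ℝ} (hf : ConvexOn ℝ univ f) (c : ℝ) :
    ConvexOn ℝ univ fun u => f (c - u) := by
  simpa [AffineMap.lineMap_apply_ring', Function.comp_def, sub_eq_neg_add, mul_comm]
    using hf.comp_affineMap (AffineMap.lineMap c (c - 1))

theorem convexOn_rpow_add_mul_abs_rpow {p a b : ℝ} (hp : 1 ≤ p) (ha : 0 ≤ a) (hb : 0 ≤ b) :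
    ConvexOn ℝ univ fun t => (a + b * |t| ^ p) ^ p⁻¹ := by
  have : Fact (1 ≤ ENNReal.ofReal p) := ⟨by simpa using hp⟩
  let x := WithLp.toLp (ENNReal.ofReal p) ![a ^ p⁻¹, 0]
  let y := WithLp.toLp (ENNReal.ofReal p) ![a ^ p⁻¹, b ^ p⁻¹]
  refine ((convexOn_norm convex_univ).comp_affineMap (AffineMap.lineMap x y)).congr ?_
  intro t _
  have hline :
      AffineMap.lineMap x y t = WithLp.toLp (ENNReal.ofReal p) ![a ^ p⁻¹, b ^ p⁻¹ * t] := by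
    ext i
    fin_cases i <;> simp [x, y, AffineMap.lineMap_apply_module', mul_comm]
  have hp0 : 0 < p := by linarith
  rw [Function.comp_apply, hline, PiLp.norm_toLp_pair hp0, abs_mul,
    mul_rpow (abs_nonneg _) (abs_nonneg _), abs_of_nonneg (rpow_nonneg ha _),
    abs_of_nonneg (rpow_nonneg hb _), ← rpow_mul ha, ← rpow_mul hb, inv_mul_cancel₀ hp0.ne',
    rpow_one, rpow_one]

/-- For `0 < ε < λ`, the function `Φ_ε(u) = 1 - (ε/λ + ((λ-ε)/λ)(1-u)³)^{1/3}`
is concave on `[0,1]`. -/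
theorem stmt13 (lam ε : ℝ) (hε : 0 < ε) (hεlam : ε < lam)
    (Φ : ℝ → ℝ)
    (hΦ : ∀ u, Φ u = 1 - (ε / lam + ((lam - ε) / lam) * (1 - u) ^ 3) ^ ((1:ℝ)/3)) :
    ConcaveOn ℝ (Set.Icc (0:ℝ) 1) Φ := by
  have hlam : 0 < lam := hε.trans hεlam
  have hconvex := (convexOn_rpow_add_mul_abs_rpow (p := 3) (by norm_num) (div_pos hε hlam).le
    (div_pos (sub_pos.2 hεlam) hlam).le).comp_const_sub 1
  refine ((concaveOn_const 1 (convex_Icc 0 1)).sub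
    (hconvex.subset (subset_univ _) (convex_Icc 0 1))).congr ?_
  rintro u ⟨-, hu⟩
  rw [Pi.sub_apply, hΦ, abs_of_nonneg (sub_nonneg.2 hu), one_div]
  norm_cast
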